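/- arXiv:1410.1114 — 8 statements merged into one kernel-verified Lean document; each statement's English description precedes it below -/
import Mathlib

section
/- Let 0 < m < M be real numbers, let f : [m,M] → ℝ be a continuous, concave, strictly positive function, and let Φ : B(H) → B(K) be a unital positive linear map between the algebras of bounded operators on complex Hilbert spaces (i.e. Φ(I) = I and Φ(X) ≥ 0 whenever X ≥ 0). Set μ_f = (f(M) − f(m))/(M − m), ν_f = (M f(m) − m f(M))/(M − m) and γ = max{ f(t)/(μ_f t + ν_f) : m ≤ t ≤ M }. Then for every self-adjoint operator A ∈ B(H) with spectrum contained in [m,M], one has γ·Φ(f(A)) ≥ f(Φ(A)). -/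
/-!
Let `L(t) = μ_f t + ν_f` be the secant line of `f` over `[m, M]`. It is positive there, lies
below `f` by concavity, and `f ≤ γ L` by the choice of `γ`. A unital linear map commutes with the
functional calculus of an affine function, and `Φ` preserves the spectral bounds `m ≤ A ≤ M`, so
`f(Φ A) ≤ γ L(Φ A) = γ Φ(L(A)) ≤ γ Φ(f(A))`, the last step by positivity of `Φ`.
-/

open Set

noncomputable def secantLine (f : ℝ → ℝ) (m M : ℝ) (t : ℝ) : ℝ :=
  (f M - f m) / (M - m) * t + (M * f m - m * f M) / (M - m)

section secantLine

variable {f : ℝ → ℝ} {m M t : ℝ}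

lemma secantLine_eq_convex_combination (hmM : m ≠ M) :
    secantLine f m M t = (M - t) / (M - m) * f m + (t - m) / (M - m) * f M := by
  have : M - m ≠ 0 := sub_ne_zero.2 hmM.symm
  unfold secantLine
  field_simp
  ring

lemma ConcaveOn.secantLine_le (hf : ConcaveOn ℝ (Icc m M) f) (hmM : m < M) (ht : t ∈ Icc m M) :
    secantLine f m M t ≤ f t := by
  have hMm : 0 < M - m := sub_pos.2 hmM
  have hpt : (M - t) / (M - m) * m + (t - m) / (M - m) * M = t := by
    field_simp
    ring
  have := hf.2 (left_mem_Icc.2 hmM.le) (right_mem_Icc.2 hmM.le)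
    (div_nonneg (sub_nonneg.2 ht.2) hMm.le) (div_nonneg (sub_nonneg.2 ht.1) hMm.le)
    (by field_simp; ring)
  simpa only [smul_eq_mul, hpt, ← secantLine_eq_convex_combination hmM.ne] using this

lemma secantLine_pos (hmM : m < M) (hm : 0 < f m) (hM : 0 < f M) (ht : t ∈ Icc m M) :
    0 < secantLine f m M t := by
  have hMm : 0 < M - m := sub_pos.2 hmM
  rw [secantLine_eq_convex_combination hmM.ne]
  rcases eq_or_lt_of_le ht.2 with rfl | htM
  · simp [div_self hMm.ne', hM]
  · have := div_pos (sub_pos.2 htM) hMm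
    have := div_nonneg (sub_nonneg.2 ht.1) hMm.le
    positivity

lemma continuous_secantLine : Continuous (secantLine f m M) := by
  unfold secantLine
  fun_prop

end secantLine

section IsGreatest

variable {s : Set ℝ} {f g : ℝ → ℝ} {γ : ℝ}

lemma IsGreatest.le_mul_of_image_div (hγ : IsGreatest ((fun t => f t / g t) '' s) γ)
    (hg : ∀ t ∈ s, 0 < g t) {t : ℝ} (ht : t ∈ s) : f t ≤ γ * g t :=
  (div_le_iff₀ (hg t ht)).1 (hγ.2 ⟨t, ht, rfl⟩)

lemma IsGreatest.nonneg_of_image_div (hγ : IsGreatest ((fun t => f t / g t) '' s) γ)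
    (hf : ∀ t ∈ s, 0 ≤ f t) (hg : ∀ t ∈ s, 0 ≤ g t) : 0 ≤ γ := by
  obtain ⟨t, ht, rfl⟩ := hγ.1
  exact div_nonneg (hf t ht) (hg t ht)

end IsGreatest

lemma cfc_affine {A : Type*} [CStarAlgebra A] (c d : ℝ) (a : A) (ha : IsSelfAdjoint a) :
    cfc (fun t : ℝ => c * t + d) a = c • a + algebraMap ℝ A d := by
  rw [cfc_add a (c * ·) (fun _ => d), cfc_const_mul_id c a, cfc_const d a]

namespace LinearMap

variable {A B : Type*} [CStarAlgebra A] [CStarAlgebra B] (Φ : A →ₗ[ℂ] B)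

lemma map_algebraMap_real (hΦ : Φ 1 = 1) (r : ℝ) : Φ (algebraMap ℝ A r) = algebraMap ℝ B r := by
  rw [Algebra.algebraMap_eq_smul_one, map_smul_of_tower, hΦ, ← Algebra.algebraMap_eq_smul_one]

lemma map_cfc_affine (hΦ : Φ 1 = 1) (c d : ℝ) {a : A} (ha : IsSelfAdjoint a)
    (hΦa : IsSelfAdjoint (Φ a)) :
    Φ (cfc (fun t : ℝ => c * t + d) a) = cfc (fun t : ℝ => c * t + d) (Φ a) := by
  rw [cfc_affine c d a ha, cfc_affine c d _ hΦa, map_add, map_smul_of_tower,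
    map_algebraMap_real Φ hΦ]

variable [PartialOrder A] [StarOrderedRing A] [PartialOrder B] [StarOrderedRing B]

lemma monotone_of_map_nonneg (hΦ : ∀ a, 0 ≤ a → 0 ≤ Φ a) : Monotone Φ :=
  OrderHomClass.mono (PositiveLinearMap.mk₀ Φ hΦ)

lemma isSelfAdjoint_map_of_map_nonneg (hΦ : ∀ a, 0 ≤ a → 0 ≤ Φ a) {a : A}
    (ha : IsSelfAdjoint a) : IsSelfAdjoint (Φ a) := by
  rw [← CFC.posPart_sub_negPart a ha, map_sub]
  exact (hΦ _ (CFC.posPart_nonneg a)).isSelfAdjoint.sub (hΦ _ (CFC.negPart_nonneg a)).isSelfAdjoint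

lemma spectrum_map_subset_Icc (hΦ_unital : Φ 1 = 1) (hΦ_pos : ∀ a, 0 ≤ a → 0 ≤ Φ a) {a : A}
    (ha : IsSelfAdjoint a) {m M : ℝ} (hspec : spectrum ℝ a ⊆ Icc m M) :
    spectrum ℝ (Φ a) ⊆ Icc m M := by
  have hΦa := Φ.isSelfAdjoint_map_of_map_nonneg hΦ_pos ha
  have hmono := Φ.monotone_of_map_nonneg hΦ_pos
  have hm : algebraMap ℝ B m ≤ Φ a := by
    rw [← map_algebraMap_real Φ hΦ_unital]
    exact hmono (algebraMap_le_of_le_spectrum (fun x hx => (hspec hx).1) ha)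
  have hM : Φ a ≤ algebraMap ℝ B M := by
    rw [← map_algebraMap_real Φ hΦ_unital]
    exact hmono (le_algebraMap_of_spectrum_le (fun x hx => (hspec hx).2) ha)
  exact fun x hx => ⟨(algebraMap_le_iff_le_spectrum hΦa).1 hm x hx,
    (le_algebraMap_iff_spectrum_le hΦa).1 hM x hx⟩

end LinearMap

theorem mond_pecaric_reverse_jensen_general
    {H K : Type*} [NormedAddCommGroup H] [InnerProductSpace ℂ H] [CompleteSpace H]
    [NormedAddCommGroup K] [InnerProductSpace ℂ K] [CompleteSpace K]
    (m M : ℝ) (hmM : m < M)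
    (f : ℝ → ℝ) (hf_cont : ContinuousOn f (Set.Icc m M))
    (hf_conc : ConcaveOn ℝ (Set.Icc m M) f)
    (hf_pos : ∀ t ∈ Set.Icc m M, 0 < f t)
    (Φ : (H →L[ℂ] H) →ₗ[ℂ] (K →L[ℂ] K))
    (hΦ_unital : Φ 1 = 1)
    (hΦ_pos : ∀ X : H →L[ℂ] H, 0 ≤ X → 0 ≤ Φ X)
    (μf νf γ : ℝ)
    (hμ : μf = (f M - f m) / (M - m))
    (hν : νf = (M * f m - m * f M) / (M - m))
    (hγ : IsGreatest ((fun t => f t / (μf * t + νf)) '' Set.Icc m M) γ)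
    (A : H →L[ℂ] H) (hA : IsSelfAdjoint A) (hspec : spectrum ℝ A ⊆ Set.Icc m M) :
    cfc f (Φ A) ≤ γ • Φ (cfc f A) := by
  subst hμ hν
  have hL_pos : ∀ t ∈ Icc m M, 0 < secantLine f m M t := fun t ht =>
    secantLine_pos hmM (hf_pos m (left_mem_Icc.2 hmM.le)) (hf_pos M (right_mem_Icc.2 hmM.le)) ht
  have hf_le : ∀ t ∈ Icc m M, f t ≤ γ * secantLine f m M t := fun t ht =>
    hγ.le_mul_of_image_div hL_pos ht
  have hγ_nonneg : 0 ≤ γ :=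
    hγ.nonneg_of_image_div (fun t ht => (hf_pos t ht).le) (fun t ht => (hL_pos t ht).le)
  have hΦA := Φ.isSelfAdjoint_map_of_map_nonneg hΦ_pos hA
  have hspecΦA := Φ.spectrum_map_subset_Icc hΦ_unital hΦ_pos hA hspec
  calc cfc f (Φ A) ≤ cfc (fun t => γ * secantLine f m M t) (Φ A) :=
        cfc_mono (fun t ht => hf_le t (hspecΦA ht)) (hf_cont.mono hspecΦA)
          (continuous_secantLine.const_smul γ).continuousOn
    _ = γ • Φ (cfc (secantLine f m M) A) := by
        rw [cfc_const_mul γ _ _ continuous_secantLine.continuousOn]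
        congr 1
        exact (Φ.map_cfc_affine hΦ_unital _ _ hA hΦA).symm
    _ ≤ γ • Φ (cfc f A) := by
        refine smul_le_smul_of_nonneg_left (Φ.monotone_of_map_nonneg hΦ_pos ?_) hγ_nonneg
        exact cfc_mono (fun t ht => hf_conc.secantLine_le hmM (hspec ht))
          continuous_secantLine.continuousOn (hf_cont.mono hspec)

/-- Mond–Pečarić: for a strictly positive concave function `f` on `[m, M]` and a unital
positive linear map `Φ` between algebras of bounded operators on complex Hilbert spaces,
`γ · Φ(f(A)) ≥ f(Φ(A))` for every selfadjoint `A` with spectrum in `[m, M]`, where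
`γ = max { f(t) / (μ_f t + ν_f) : m ≤ t ≤ M }`. -/
theorem mond_pecaric_reverse_jensen
    {H K : Type*} [NormedAddCommGroup H] [InnerProductSpace ℂ H] [CompleteSpace H]
    [NormedAddCommGroup K] [InnerProductSpace ℂ K] [CompleteSpace K]
    (m M : ℝ) (hm : 0 < m) (hmM : m < M)
    (f : ℝ → ℝ) (hf_cont : ContinuousOn f (Set.Icc m M))
    (hf_conc : ConcaveOn ℝ (Set.Icc m M) f)
    (hf_pos : ∀ t ∈ Set.Icc m M, 0 < f t)
    (Φ : (H →L[ℂ] H) →ₗ[ℂ] (K →L[ℂ] K))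
    (hΦ_unital : Φ 1 = 1)
    (hΦ_pos : ∀ X : H →L[ℂ] H, 0 ≤ X → 0 ≤ Φ X)
    (μf νf γ : ℝ)
    (hμ : μf = (f M - f m) / (M - m))
    (hν : νf = (M * f m - m * f M) / (M - m))
    (hγ : IsGreatest ((fun t => f t / (μf * t + νf)) '' Set.Icc m M) γ)
    (A : H →L[ℂ] H) (hA : IsSelfAdjoint A) (hspec : spectrum ℝ A ⊆ Set.Icc m M) :
    cfc f (Φ A) ≤ γ • Φ (cfc f A) :=
  mond_pecaric_reverse_jensen_general m M hmM f hf_cont hf_conc hf_pos Φ hΦ_unital hΦ_pos μf νf γ hμ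
    hν hγ A hA hspec
end

section
/- Let 0 < m < M, let α ∈ (0,1), and let Φ : B(H) → B(K) be a unital positive linear map between the algebras of bounded operators on complex Hilbert spaces. Set μ = (M^α − m^α)/(M − m), ν = (M m^α − m M^α)/(M − m) and γ = max{ t^α/(μ t + ν) : m ≤ t ≤ M }. Then for all positive invertible operators A, B ∈ B(H) with mA ≤ B ≤ MA, one has γ·Φ(A ♯_α B) ≥ Φ(A) ♯_α Φ(B). -/
/-! Mond–Pečarić method. Since `m • A ≤ B ≤ M • A`, the spectrum of `C = A^{-1/2} B A^{-1/2}`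
lies in `[m, M]`, and there the concave function `t ^ α` lies between its secant `μ t + ν` and
`γ (μ t + ν)`. Functional calculus at `C` followed by conjugation with `A^{1/2}` turns these
scalar bounds into `μ B + ν A ≤ A ♯_α B` and, for `Φ A, Φ B` in place of `A, B`,
`Φ A ♯_α Φ B ≤ γ (μ Φ B + ν Φ A) = γ Φ (μ B + ν A)`. Applying the monotone map `Φ` to the
first bound closes the chain. -/

variable {H : Type*} [NormedAddCommGroup H] [InnerProductSpace ℂ H] [CompleteSpace H]

/-- Real power `A^r` of a bounded operator, via the continuous functional calculus. -/
noncomputable def opRpow (A : H →L[ℂ] H) (r : ℝ) : H →L[ℂ] H :=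
  cfc (fun x : ℝ => x ^ r) A

/-- The weighted operator geometric mean
`A ♯_μ B = A^{1/2} (A^{-1/2} B A^{-1/2})^μ A^{1/2}`. -/
noncomputable def wgm (μ : ℝ) (A B : H →L[ℂ] H) : H →L[ℂ] H :=
  opRpow A (1/2) * opRpow (opRpow A (-(1/2)) * B * opRpow A (-(1/2))) μ * opRpow A (1/2)

lemma ConcaveOn.secant_le {f : ℝ → ℝ} {s : Set ℝ} (hf : ConcaveOn ℝ s f) {x y t : ℝ}
    (hx : x ∈ s) (hy : y ∈ s) (hxy : x < y) (ht : t ∈ Set.Icc x y) :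
    (f y - f x) / (y - x) * t + (y * f x - x * f y) / (y - x) ≤ f t := by
  have hyx : 0 < y - x := sub_pos.mpr hxy
  have hyx_ne : y - x ≠ 0 := hyx.ne'
  have key := hf.2 hx hy (div_nonneg (by linarith [ht.2]) hyx.le : 0 ≤ (y - t) / (y - x))
    (div_nonneg (by linarith [ht.1]) hyx.le : 0 ≤ (t - x) / (y - x)) (by field_simp; ring)
  have ht' : (y - t) / (y - x) * x + (t - x) / (y - x) * y = t := by field_simp; ring
  simp only [smul_eq_mul, ht'] at key
  calc _ = (y - t) / (y - x) * f x + (t - x) / (y - x) * f y := by field_simp; ring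
    _ ≤ f t := key

lemma secant_rpow_pos {α m M t : ℝ} (hm : 0 < m) (hmM : m < M) (ht : t ∈ Set.Icc m M) :
    0 < (M ^ α - m ^ α) / (M - m) * t + (M * m ^ α - m * M ^ α) / (M - m) := by
  have hMm : 0 < M - m := sub_pos.mpr hmM
  have hmα := Real.rpow_pos_of_pos hm α
  have hMα := Real.rpow_pos_of_pos (hm.trans hmM) α
  rw [div_mul_eq_mul_div, ← add_div, lt_div_iff₀ hMm, zero_mul]
  have hk := lt_min hmα hMα
  nlinarith [mul_le_mul_of_nonneg_left (min_le_left (m ^ α) (M ^ α)) (sub_nonneg.mpr ht.2),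
    mul_le_mul_of_nonneg_left (min_le_right (m ^ α) (M ^ α)) (sub_nonneg.mpr ht.1),
    mul_pos hMm hk]

namespace CFC

variable {A : Type*} [CStarAlgebra A] [PartialOrder A] [StarOrderedRing A] {a b : A} {m M : ℝ}

lemma conj_rpow_neg_half_smul (ha : IsStrictlyPositive a) (r : ℝ) :
    a ^ (-(1 / 2) : ℝ) * (r • a) * a ^ (-(1 / 2) : ℝ) = algebraMap ℝ A r := by
  rw [mul_smul_comm, smul_mul_assoc, conjugate_rpow_neg_one_half a ha,
    Algebra.algebraMap_eq_smul_one]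

lemma spectrum_conj_rpow_neg_half_subset_Icc (ha : IsStrictlyPositive a)
    (h₁ : m • a ≤ b) (h₂ : b ≤ M • a) :
    spectrum ℝ (a ^ (-(1 / 2) : ℝ) * b * a ^ (-(1 / 2) : ℝ)) ⊆ Set.Icc m M := by
  have hs : IsSelfAdjoint (a ^ (-(1 / 2) : ℝ)) := rpow_nonneg.isSelfAdjoint
  have hlo := hs.conjugate_le_conjugate h₁
  have hhi := hs.conjugate_le_conjugate h₂
  rw [conj_rpow_neg_half_smul ha] at hlo hhi
  have hc := IsSelfAdjoint.of_le hhi (.algebraMap A (.all M))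
  exact fun x hx => ⟨(algebraMap_le_iff_le_spectrum hc).mp hlo x hx,
    (le_algebraMap_iff_spectrum_le hc).mp hhi x hx⟩

lemma conj_rpow_half_cfc_affine (ha : IsStrictlyPositive a) (hb : IsSelfAdjoint b) (μ ν : ℝ) :
    a ^ (1 / 2 : ℝ) * cfc (fun t => μ * t + ν) (a ^ (-(1 / 2) : ℝ) * b * a ^ (-(1 / 2) : ℝ)) *
      a ^ (1 / 2 : ℝ) = μ • b + ν • a := by
  have hs : IsSelfAdjoint (a ^ (-(1 / 2) : ℝ)) := rpow_nonneg.isSelfAdjoint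
  set c := a ^ (-(1 / 2) : ℝ) * b * a ^ (-(1 / 2) : ℝ) with hc_def
  have hc : IsSelfAdjoint c := by
    simpa only [hs.star_eq] using hb.conjugate' (a ^ (-(1 / 2) : ℝ))
  have hsqrt : a ^ (1 / 2 : ℝ) * a ^ (1 / 2 : ℝ) = a := by
    rw [← rpow_add ha.isUnit, add_halves, rpow_one a]
  rw [cfc_add (a := c) (fun t => μ * t) (fun _ => ν), cfc_const_mul μ (fun t : ℝ => t) c,
    cfc_id' ℝ c, cfc_const ν c, Algebra.algebraMap_eq_smul_one]
  simp only [mul_add, add_mul, mul_smul_comm, smul_mul_assoc, mul_one, hsqrt]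
  congr 2
  rw [hc_def]
  simp only [← mul_assoc, rpow_mul_rpow_neg (1 / 2 : ℝ) ha, one_mul]
  rw [mul_assoc, rpow_neg_mul_rpow (1 / 2 : ℝ) ha, mul_one]

lemma conj_rpow_half_cfc_mono (ha : IsStrictlyPositive a) (h₁ : m • a ≤ b) (h₂ : b ≤ M • a)
    {f g : ℝ → ℝ} (hfg : ∀ t ∈ Set.Icc m M, f t ≤ g t) (hf : ContinuousOn f (Set.Icc m M))
    (hg : ContinuousOn g (Set.Icc m M)) :
    a ^ (1 / 2 : ℝ) * cfc f (a ^ (-(1 / 2) : ℝ) * b * a ^ (-(1 / 2) : ℝ)) * a ^ (1 / 2 : ℝ) ≤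
      a ^ (1 / 2 : ℝ) * cfc g (a ^ (-(1 / 2) : ℝ) * b * a ^ (-(1 / 2) : ℝ)) * a ^ (1 / 2 : ℝ) :=
  have hspec := spectrum_conj_rpow_neg_half_subset_Icc ha h₁ h₂
  IsSelfAdjoint.conjugate_le_conjugate
    (cfc_mono (fun t ht => hfg t (hspec ht)) (hf.mono hspec) (hg.mono hspec))
    rpow_nonneg.isSelfAdjoint

end CFC

lemma PositiveLinearMap.isStrictlyPositive_apply {A B : Type*} [CStarAlgebra A] [PartialOrder A]
    [StarOrderedRing A] [CStarAlgebra B] [PartialOrder B] [StarOrderedRing B] (Φ : A →ₚ[ℂ] B)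
    (hΦ : Φ 1 = 1) {a : A} (ha : IsStrictlyPositive a) : IsStrictlyPositive (Φ a) := by
  cases subsingleton_or_nontrivial A with
  | inl _ =>
    have : Subsingleton B :=
      subsingleton_of_zero_eq_one (by rw [← hΦ, Subsingleton.elim (1 : A) 0, map_zero])
    exact .of_subsingleton
  | inr _ =>
    obtain ⟨r, hr, hra⟩ :=
      (CFC.exists_pos_algebraMap_le_iff ha.isSelfAdjoint).mpr fun _ => ha.spectrum_pos
    refine (isStrictlyPositive_algebraMap hr).of_le ?_
    simpa [Algebra.algebraMap_eq_smul_one, hΦ] using OrderHomClass.mono Φ hra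

section WeightedGeometricMean

variable {a b : H →L[ℂ] H} {α m M : ℝ}

lemma wgm_eq_conj_rpow_half_cfc (ha : 0 ≤ a) :
    wgm α a b = a ^ (1 / 2 : ℝ) * cfc (fun t : ℝ => t ^ α)
      (a ^ (-(1 / 2) : ℝ) * b * a ^ (-(1 / 2) : ℝ)) * a ^ (1 / 2 : ℝ) := by
  simp only [wgm, opRpow, ← CFC.rpow_eq_cfc_real ha]

lemma affine_le_wgm (hm : 0 < m) (ha : IsStrictlyPositive a) (h₁ : m • a ≤ b) (h₂ : b ≤ M • a)
    {μ ν : ℝ} (h : ∀ t ∈ Set.Icc m M, μ * t + ν ≤ t ^ α) : μ • b + ν • a ≤ wgm α a b := by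
  have hb : IsSelfAdjoint b := .of_le h₂ ((IsSelfAdjoint.all M).smul ha.isSelfAdjoint)
  rw [wgm_eq_conj_rpow_half_cfc ha.nonneg, ← CFC.conj_rpow_half_cfc_affine ha hb μ ν]
  exact CFC.conj_rpow_half_cfc_mono ha h₁ h₂ h (by fun_prop)
    (continuousOn_id.rpow_const fun t ht => .inl (hm.trans_le ht.1).ne')

lemma wgm_le_affine (hm : 0 < m) (ha : IsStrictlyPositive a) (h₁ : m • a ≤ b) (h₂ : b ≤ M • a)
    {μ ν : ℝ} (h : ∀ t ∈ Set.Icc m M, t ^ α ≤ μ * t + ν) : wgm α a b ≤ μ • b + ν • a := by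
  have hb : IsSelfAdjoint b := .of_le h₂ ((IsSelfAdjoint.all M).smul ha.isSelfAdjoint)
  rw [wgm_eq_conj_rpow_half_cfc ha.nonneg, ← CFC.conj_rpow_half_cfc_affine ha hb μ ν]
  exact CFC.conj_rpow_half_cfc_mono ha h₁ h₂ h
    (continuousOn_id.rpow_const fun t ht => .inl (hm.trans_le ht.1).ne') (by fun_prop)

end WeightedGeometricMean

theorem reverse_ando_weighted_geometric_mean_general
    {K : Type*} [NormedAddCommGroup K] [InnerProductSpace ℂ K] [CompleteSpace K]
    (m M : ℝ) (hm : 0 < m) (hmM : m < M)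
    (α : ℝ) (hα : α ∈ Set.Ioo (0 : ℝ) 1)
    (Φ : (H →L[ℂ] H) →ₗ[ℂ] (K →L[ℂ] K))
    (hΦ_unital : Φ 1 = 1)
    (hΦ_pos : ∀ X : H →L[ℂ] H, 0 ≤ X → 0 ≤ Φ X)
    (μ ν γ : ℝ)
    (hμ : μ = (M ^ α - m ^ α) / (M - m))
    (hν : ν = (M * m ^ α - m * M ^ α) / (M - m))
    (hγ : IsGreatest ((fun t => t ^ α / (μ * t + ν)) '' Set.Icc m M) γ)
    (A B : H →L[ℂ] H) (hA : 0 ≤ A) (hAu : IsUnit A)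
    (h1 : m • A ≤ B) (h2 : B ≤ M • A) :
    wgm α (Φ A) (Φ B) ≤ γ • Φ (wgm α A B) := by
  have hsecant_le : ∀ t ∈ Set.Icc m M, μ * t + ν ≤ t ^ α := fun t ht => by
    subst hμ hν
    exact (Real.concaveOn_rpow hα.1.le hα.2.le).secant_le hm.le (hm.trans hmM).le hmM ht
  have hsecant_pos : ∀ t ∈ Set.Icc m M, 0 < μ * t + ν := fun t ht => by
    subst hμ hν
    exact secant_rpow_pos hm hmM ht
  have hle_γ_secant : ∀ t ∈ Set.Icc m M, t ^ α ≤ (γ * μ) * t + γ * ν := fun t ht => by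
    have := (div_le_iff₀ (hsecant_pos t ht)).mp (hγ.2 ⟨t, ht, rfl⟩)
    linarith
  have hγ_nonneg : 0 ≤ γ :=
    have hm_mem := Set.left_mem_Icc.mpr hmM.le
    (div_nonneg (Real.rpow_nonneg hm.le α) (hsecant_pos m hm_mem).le).trans
      (hγ.2 ⟨m, hm_mem, rfl⟩)
  let Ψ := PositiveLinearMap.mk₀ Φ hΦ_pos
  have hA' : IsStrictlyPositive A := ⟨hA, hAu⟩
  have hΦA : IsStrictlyPositive (Φ A) := Ψ.isStrictlyPositive_apply hΦ_unital hA'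
  have hΦ₁ : m • Φ A ≤ Φ B := (Ψ.map_smul_of_tower m A).symm.trans_le (OrderHomClass.mono Ψ h1)
  have hΦ₂ : Φ B ≤ M • Φ A := (OrderHomClass.mono Ψ h2).trans_eq (Ψ.map_smul_of_tower M A)
  calc wgm α (Φ A) (Φ B) ≤ (γ * μ) • Φ B + (γ * ν) • Φ A :=
        wgm_le_affine hm hΦA hΦ₁ hΦ₂ hle_γ_secant
    _ = γ • Φ (μ • B + ν • A) := by simp [smul_add, smul_smul]
    _ ≤ γ • Φ (wgm α A B) :=
      smul_le_smul_of_nonneg_left (OrderHomClass.mono Ψ (affine_le_wgm hm hA' h1 h2 hsecant_le))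
        hγ_nonneg

/-- Reverse Ando inequality for the weighted geometric mean via the Mond–Pečarić method:
`γ · Φ(A ♯_α B) ≥ Φ(A) ♯_α Φ(B)` whenever `mA ≤ B ≤ MA`. -/
theorem reverse_ando_weighted_geometric_mean
    {K : Type*} [NormedAddCommGroup K] [InnerProductSpace ℂ K] [CompleteSpace K]
    (m M : ℝ) (hm : 0 < m) (hmM : m < M)
    (α : ℝ) (hα : α ∈ Set.Ioo (0 : ℝ) 1)
    (Φ : (H →L[ℂ] H) →ₗ[ℂ] (K →L[ℂ] K))
    (hΦ_unital : Φ 1 = 1)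
    (hΦ_pos : ∀ X : H →L[ℂ] H, 0 ≤ X → 0 ≤ Φ X)
    (μ ν γ : ℝ)
    (hμ : μ = (M ^ α - m ^ α) / (M - m))
    (hν : ν = (M * m ^ α - m * M ^ α) / (M - m))
    (hγ : IsGreatest ((fun t => t ^ α / (μ * t + ν)) '' Set.Icc m M) γ)
    (A B : H →L[ℂ] H) (hA : 0 ≤ A) (hAu : IsUnit A) (hB : 0 ≤ B) (hBu : IsUnit B)
    (h1 : m • A ≤ B) (h2 : B ≤ M • A) :
    wgm α (Φ A) (Φ B) ≤ γ • Φ (wgm α A B) :=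
  reverse_ando_weighted_geometric_mean_general m M hm hmM α hα Φ hΦ_unital hΦ_pos μ ν γ hμ hν hγ A B
    hA hAu h1 h2
end

section
/- Let 0 < m < M, let α ∈ (0,1), and let A_j, B_j (1 ≤ j ≤ n) be positive invertible bounded operators on a complex Hilbert space with m A_j ≤ B_j ≤ M A_j for all j. Then (α^α (M − m) (M m^α − m M^α)^{α−1} / ((1−α)^{α−1} (M^α − m^α)^α)) · Σ_{j=1}^n (A_j ♯_α B_j) ≥ (Σ_{j=1}^n A_j) ♯_α (Σ_{j=1}^n B_j). -/
/-!
Put `C = A^{-1/2} B A^{-1/2}`; the hypotheses `m A ≤ B ≤ M A` place the spectrum of `C` in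
`[m, M]`. There the concave function `x ^ α` lies above its chord `μ x + ν` and below every line
`p x + q` with `p ^ α q ^ (1 - α) ≥ α ^ α (1 - α) ^ (1 - α)` (weighted AM–GM). Applying the
functional calculus to `C` and conjugating by `A^{1/2}` turns a scalar bound `f ≤ g` on `[m, M]`
into an operator bound, giving `μ B + ν A ≤ A ♯_α B` and `A ♯_α B ≤ p B + q A`. The constant `K`
of the theorem is the one for which `p = K μ`, `q = K ν` meet the AM–GM condition with equality,
so `(Σ A_j) ♯_α (Σ B_j) ≤ K (μ Σ B_j + ν Σ A_j) ≤ K Σ (A_j ♯_α B_j)`.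
-/

variable {H : Type*} [NormedAddCommGroup H] [InnerProductSpace ℂ H] [CompleteSpace H]

open Set

lemma ConcaveOn.chord_le {s : Set ℝ} {f : ℝ → ℝ} (hf : ConcaveOn ℝ s f) {m M x : ℝ}
    (hm : m ∈ s) (hM : M ∈ s) (hmM : m < M) (hx : x ∈ Icc m M) :
    (f M - f m) / (M - m) * x + (M * f m - m * f M) / (M - m) ≤ f x := by
  have hMm : 0 < M - m := sub_pos.2 hmM
  have h := hf.2 hm hM (div_nonneg (sub_nonneg.2 hx.2) hMm.le)
    (div_nonneg (sub_nonneg.2 hx.1) hMm.le)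
    (by rw [← add_div, div_eq_one_iff_eq hMm.ne']; ring)
  have hcomb : (M - x) / (M - m) * m + (x - m) / (M - m) * M = x := by
    field_simp; ring
  simp only [smul_eq_mul, hcomb] at h
  refine le_of_eq_of_le ?_ h
  field_simp
  ring

lemma Real.rpow_le_mul_add {α p q x : ℝ} (hα0 : 0 < α) (hα1 : α < 1) (hp : 0 < p) (hq : 0 < q)
    (hx : 0 ≤ x) (hpq : α ^ α * (1 - α) ^ (1 - α) ≤ p ^ α * q ^ (1 - α)) :
    x ^ α ≤ p * x + q := by
  have h1α : 0 < 1 - α := sub_pos.2 hα1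
  have hc : 0 < α ^ α * (1 - α) ^ (1 - α) := by positivity
  have amgm := Real.geom_mean_le_arith_mean2_weighted hα0.le h1α.le
    (div_nonneg (mul_nonneg hp.le hx) hα0.le) (div_nonneg hq.le h1α.le) (add_sub_cancel α 1)
  have hrw : (p * x / α) ^ α * (q / (1 - α)) ^ (1 - α)
      = x ^ α * (p ^ α * q ^ (1 - α) / (α ^ α * (1 - α) ^ (1 - α))) := by
    rw [Real.div_rpow (by positivity) hα0.le, Real.mul_rpow hp.le hx,
      Real.div_rpow hq.le h1α.le]
    field_simp
  calc x ^ α ≤ x ^ α * (p ^ α * q ^ (1 - α) / (α ^ α * (1 - α) ^ (1 - α))) :=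
        le_mul_of_one_le_right (by positivity) ((one_le_div hc).2 hpq)
    _ ≤ α * (p * x / α) + (1 - α) * (q / (1 - α)) := hrw ▸ amgm
    _ = p * x + q := by field_simp

lemma Real.mul_rpow_lt_mul_rpow {m M α : ℝ} (hm : 0 < m) (hmM : m < M) (hα : α < 1) :
    m * M ^ α < M * m ^ α := by
  have hM : 0 < M := hm.trans hmM
  have h := Real.rpow_lt_rpow_of_neg hm hmM (sub_neg.2 hα)
  rw [Real.rpow_sub_one hM.ne', Real.rpow_sub_one hm.ne', div_lt_div_iff₀ hM hm] at h
  linarith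

lemma rpow_mul_rpow_one_sub_eq_of_eq {α a b d K : ℝ} (hα0 : 0 < α) (hα1 : α < 1) (ha : 0 < a)
    (hb : 0 < b) (hd : 0 < d) (hK : K = α ^ α * d * b ^ (α - 1) / ((1 - α) ^ (α - 1) * a ^ α)) :
    (K * (a / d)) ^ α * (K * (b / d)) ^ (1 - α) = α ^ α * (1 - α) ^ (1 - α) := by
  have h1α : 0 < 1 - α := sub_pos.2 hα1
  have hK0 : 0 < K := hK ▸ by positivity
  have hsplit : (K * (a / d)) ^ α * (K * (b / d)) ^ (1 - α)
      = K ^ (α + (1 - α)) * ((a / d) ^ α * (b / d) ^ (1 - α)) := by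
    rw [Real.mul_rpow hK0.le (by positivity), Real.mul_rpow hK0.le (by positivity),
      Real.rpow_add hK0]
    ring
  rw [hsplit, add_sub_cancel, Real.rpow_one, hK, Real.div_rpow ha.le hd.le,
    Real.div_rpow hb.le hd.le]
  simp only [Real.rpow_sub hb, Real.rpow_sub h1α, Real.rpow_sub hd, Real.rpow_one]
  field_simp

section GeometricMean

variable {A B : H →L[ℂ] H} {m M : ℝ}

lemma wgm_zero_left (μ : ℝ) : wgm μ 0 B = 0 := by
  simp [wgm, opRpow]

lemma wgm_eq_rpow_mul_cfc_mul_rpow (hA : 0 ≤ A) (μ : ℝ) :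
    wgm μ A B = A ^ (1 / 2 : ℝ) *
      cfc (fun x : ℝ => x ^ μ) (A ^ (-(1 / 2) : ℝ) * B * A ^ (-(1 / 2) : ℝ)) * A ^ (1 / 2 : ℝ) := by
  simp only [wgm, opRpow, CFC.rpow_eq_cfc_real hA]

lemma spectrum_conj_rpow_neg_half_subset_Icc (hA : IsStrictlyPositive A) (hB : IsSelfAdjoint B)
    (h1 : m • A ≤ B) (h2 : B ≤ M • A) :
    spectrum ℝ (A ^ (-(1 / 2) : ℝ) * B * A ^ (-(1 / 2) : ℝ)) ⊆ Icc m M := by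
  set T := A ^ (-(1 / 2) : ℝ)
  have hT : IsSelfAdjoint T := CFC.rpow_nonneg.isSelfAdjoint
  have hTAT : T * A * T = 1 := CFC.conjugate_rpow_neg_one_half A hA
  have hC : IsSelfAdjoint (T * B * T) := hB.conjugate_self hT
  have hlow : algebraMap ℝ _ m ≤ T * B * T := by
    have := hT.conjugate_le_conjugate h1
    rwa [mul_smul_comm, smul_mul_assoc, hTAT, ← Algebra.algebraMap_eq_smul_one] at this
  have hup : T * B * T ≤ algebraMap ℝ _ M := by
    have := hT.conjugate_le_conjugate h2
    rwa [mul_smul_comm, smul_mul_assoc, hTAT, ← Algebra.algebraMap_eq_smul_one] at this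
  exact fun x hx => ⟨(algebraMap_le_iff_le_spectrum hC).1 hlow x hx,
    (le_algebraMap_iff_spectrum_le hC).1 hup x hx⟩

lemma rpow_half_mul_cfc_affine_mul_rpow_half (hA : IsStrictlyPositive A) (hB : IsSelfAdjoint B)
    (p q : ℝ) :
    A ^ (1 / 2 : ℝ) * cfc (fun x : ℝ => p * x + q) (A ^ (-(1 / 2) : ℝ) * B * A ^ (-(1 / 2) : ℝ)) *
      A ^ (1 / 2 : ℝ) = p • B + q • A := by
  set S := A ^ (1 / 2 : ℝ)
  set T := A ^ (-(1 / 2) : ℝ)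
  have hC : IsSelfAdjoint (T * B * T) := hB.conjugate_self CFC.rpow_nonneg.isSelfAdjoint
  have hST : S * T = 1 := CFC.rpow_mul_rpow_neg _ hA
  have hTS : T * S = 1 := CFC.rpow_neg_mul_rpow _ hA
  have hSS : S * S = A := by
    rw [← CFC.rpow_add hA.isUnit]; norm_num [CFC.rpow_one A hA.nonneg]
  rw [cfc_add .., cfc_const_mul_id p _ hC, cfc_const q _ hC, Algebra.algebraMap_eq_smul_one]
  calc S * (p • (T * B * T) + q • 1) * S = p • ((S * T) * B * (T * S)) + q • (S * S) := by
        simp only [mul_add, add_mul, mul_smul_comm, smul_mul_assoc, mul_one, mul_assoc]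
    _ = p • B + q • A := by rw [hST, hTS, hSS, one_mul, mul_one]

lemma wgm_le_smul_add_smul (hm : 0 < m) (hA : IsStrictlyPositive A) (hB : IsSelfAdjoint B)
    (h1 : m • A ≤ B) (h2 : B ≤ M • A) {α p q : ℝ} (h : ∀ x ∈ Icc m M, x ^ α ≤ p * x + q) :
    wgm α A B ≤ p • B + q • A := by
  have hspec := spectrum_conj_rpow_neg_half_subset_Icc hA hB h1 h2
  rw [wgm_eq_rpow_mul_cfc_mul_rpow hA.nonneg, ← rpow_half_mul_cfc_affine_mul_rpow_half hA hB]
  refine CFC.rpow_nonneg.isSelfAdjoint.conjugate_le_conjugate <|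
    cfc_mono (fun x hx => h x (hspec hx)) ?_
  exact continuousOn_id.rpow_const fun x hx => Or.inl (hm.trans_le (hspec hx).1).ne'

lemma smul_add_smul_le_wgm (hm : 0 < m) (hA : IsStrictlyPositive A) (hB : IsSelfAdjoint B)
    (h1 : m • A ≤ B) (h2 : B ≤ M • A) {α p q : ℝ} (h : ∀ x ∈ Icc m M, p * x + q ≤ x ^ α) :
    p • B + q • A ≤ wgm α A B := by
  have hspec := spectrum_conj_rpow_neg_half_subset_Icc hA hB h1 h2
  rw [wgm_eq_rpow_mul_cfc_mul_rpow hA.nonneg, ← rpow_half_mul_cfc_affine_mul_rpow_half hA hB]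
  refine CFC.rpow_nonneg.isSelfAdjoint.conjugate_le_conjugate <|
    cfc_mono (fun x hx => h x (hspec hx)) (hg := ?_)
  exact continuousOn_id.rpow_const fun x hx => Or.inl (hm.trans_le (hspec hx).1).ne'

end GeometricMean

theorem reverse_weighted_geometric_mean_sum_general
    (m M : ℝ) (hm : 0 < m) (hmM : m < M)
    (α : ℝ) (hα : α ∈ Set.Ioo (0 : ℝ) 1)
    (n : ℕ) (A B : Fin n → (H →L[ℂ] H))
    (hA : ∀ j, 0 ≤ A j) (hAu : ∀ j, IsUnit (A j))
    (hB : ∀ j, 0 ≤ B j)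
    (h1 : ∀ j, m • A j ≤ B j) (h2 : ∀ j, B j ≤ M • A j) :
    wgm α (∑ j, A j) (∑ j, B j) ≤
      (α ^ α * (M - m) * (M * m ^ α - m * M ^ α) ^ (α - 1) /
        ((1 - α) ^ (α - 1) * (M ^ α - m ^ α) ^ α)) • ∑ j, wgm α (A j) (B j) := by
  obtain ⟨hα0, hα1⟩ := hα
  rcases isEmpty_or_nonempty (Fin n) with _ | ⟨⟨j₀⟩⟩
  · simp [wgm_zero_left]
  have hd : 0 < M - m := sub_pos.2 hmM
  have ha : 0 < M ^ α - m ^ α := sub_pos.2 (Real.rpow_lt_rpow hm.le hmM hα0)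
  have hb : 0 < M * m ^ α - m * M ^ α := sub_pos.2 (Real.mul_rpow_lt_mul_rpow hm hmM hα1)
  set K := α ^ α * (M - m) * (M * m ^ α - m * M ^ α) ^ (α - 1) /
    ((1 - α) ^ (α - 1) * (M ^ α - m ^ α) ^ α) with hK
  set μ := (M ^ α - m ^ α) / (M - m)
  set ν := (M * m ^ α - m * M ^ α) / (M - m)
  have hK0 : 0 < K := by have : 0 < 1 - α := sub_pos.2 hα1; positivity
  have hAsum : IsStrictlyPositive (∑ j, A j) := ((hAu j₀).isStrictlyPositive (hA j₀)).of_le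
    (Finset.single_le_sum (fun j _ => hA j) (Finset.mem_univ j₀))
  have hline : ∀ x ∈ Icc m M, x ^ α ≤ (K * μ) * x + K * ν := fun x hx =>
    Real.rpow_le_mul_add hα0 hα1 (by positivity) (by positivity) (hm.le.trans hx.1)
      (rpow_mul_rpow_one_sub_eq_of_eq hα0 hα1 ha hb hd hK).ge
  calc wgm α (∑ j, A j) (∑ j, B j) ≤ (K * μ) • ∑ j, B j + (K * ν) • ∑ j, A j :=
        wgm_le_smul_add_smul hm hAsum (Finset.sum_nonneg fun j _ => hB j).isSelfAdjoint
          (by simpa only [Finset.smul_sum] using Finset.sum_le_sum fun j _ => h1 j)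
          (by simpa only [Finset.smul_sum] using Finset.sum_le_sum fun j _ => h2 j) hline
    _ = K • ∑ j, (μ • B j + ν • A j) := by
        simp only [Finset.smul_sum, Finset.sum_add_distrib, smul_add, smul_smul]
    _ ≤ K • ∑ j, wgm α (A j) (B j) := smul_le_smul_of_nonneg_left (Finset.sum_le_sum fun j _ =>
        smul_add_smul_le_wgm hm ((hAu j).isStrictlyPositive (hA j)) (hB j).isSelfAdjoint
          (h1 j) (h2 j) fun x hx => (Real.concaveOn_rpow hα0.le hα1.le).chord_le hm.le
            (hm.le.trans hmM.le) hmM hx) hK0.le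

/-- Reverse Callebaut-type inequality for sums:
`(α^α (M−m)(Mm^α − mM^α)^{α−1} / ((1−α)^{α−1}(M^α − m^α)^α)) · Σ (A_j ♯_α B_j)
  ≥ (Σ A_j) ♯_α (Σ B_j)` whenever `0 < mA_j ≤ B_j ≤ MA_j`. -/
theorem reverse_weighted_geometric_mean_sum
    (m M : ℝ) (hm : 0 < m) (hmM : m < M)
    (α : ℝ) (hα : α ∈ Set.Ioo (0 : ℝ) 1)
    (n : ℕ) (A B : Fin n → (H →L[ℂ] H))
    (hA : ∀ j, 0 ≤ A j) (hAu : ∀ j, IsUnit (A j))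
    (hB : ∀ j, 0 ≤ B j) (hBu : ∀ j, IsUnit (B j))
    (h1 : ∀ j, m • A j ≤ B j) (h2 : ∀ j, B j ≤ M • A j) :
    wgm α (∑ j, A j) (∑ j, B j) ≤
      (α ^ α * (M - m) * (M * m ^ α - m * M ^ α) ^ (α - 1) /
        ((1 - α) ^ (α - 1) * (M ^ α - m ^ α) ^ α)) • ∑ j, wgm α (A j) (B j) :=
  reverse_weighted_geometric_mean_sum_general m M hm hmM α hα n A B hA hAu hB h1 h2
end

section
/- Let 0 < m < M and let A_j, B_j (1 ≤ j ≤ n) be positive invertible bounded operators on a complex Hilbert space with m A_j ≤ B_j ≤ M A_j for all j. Then ((1+M)(1+m)/(1+√(Mm))^2) · Σ_{j=1}^n (A_j ! B_j) ≥ (Σ_{j=1}^n A_j) ! (Σ_{j=1}^n B_j). -/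
/-!
Put `T = A^{-1/2} B A^{-1/2}`, so that `m ≤ T ≤ M`, `B + d A = A^{1/2} (T + d) A^{1/2}` and
`A ! B = A^{1/2} f(T) A^{1/2}` with `f t = 2t/(1+t)`. The concave function `f` lies above its chord
`2(t + mM)/((1+m)(1+M))` on `[m, M]` and below its tangent `2(t + mM)/(1+√(Mm))²` at `√(Mm)`.
Both lines are multiples of `t + mM`, so by the functional calculus `A ! B` is squeezed between
two multiples of `B + mM A`, which is additive in `(A, B)`: apply the chord bound to each pair and
the tangent bound to the sums, and the ratio of the two slopes is the constant of the theorem.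
-/

variable {H : Type*} [NormedAddCommGroup H] [InnerProductSpace ℂ H] [CompleteSpace H]

/-- The operator geometric mean `A ♯ B`. -/
noncomputable def geomMean (A B : H →L[ℂ] H) : H →L[ℂ] H := wgm (1/2) A B

/-- The operator arithmetic mean `A ∇ B = (A + B)/2`. -/
noncomputable def arithMean (A B : H →L[ℂ] H) : H →L[ℂ] H := ((1 : ℝ)/2) • (A + B)

/-- The operator harmonic mean `A ! B = ((A⁻¹ + B⁻¹)/2)⁻¹`. -/
noncomputable def harmMean (A B : H →L[ℂ] H) : H →L[ℂ] H :=
  Ring.inverse (((1 : ℝ)/2) • (Ring.inverse A + Ring.inverse B))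

open Ring CFC

lemma chord_le_two_mul_div_one_add {m M x : ℝ} (hm : -1 < m) (hmx : m ≤ x) (hxM : x ≤ M) :
    2 / ((1 + m) * (1 + M)) * (x + m * M) ≤ 2 * x / (1 + x) := by
  rw [div_mul_eq_mul_div, div_le_div_iff₀ (by nlinarith) (by linarith)]
  nlinarith [mul_nonneg (sub_nonneg.2 hmx) (sub_nonneg.2 hxM)]

lemma two_mul_div_one_add_le_tangent {r x : ℝ} (hr : 0 ≤ r) (hx : -1 < x) :
    2 * x / (1 + x) ≤ 2 / (1 + r) ^ 2 * (x + r ^ 2) := by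
  rw [div_mul_eq_mul_div, div_le_div_iff₀ (by linarith) (by positivity)]
  nlinarith [sq_nonneg (x - r)]

section CStarAlgebra

variable {𝒜 : Type*} [CStarAlgebra 𝒜]

lemma smul_add_smul_one_eq_cfc (a : 𝒜) (c d : ℝ) (ha : IsSelfAdjoint a) :
    c • (a + d • 1) = cfc (fun x : ℝ => c * (x + d)) a := by
  rw [cfc_const_mul .., cfc_add .., cfc_id' .., cfc_const .., Algebra.algebraMap_eq_smul_one]

variable [PartialOrder 𝒜] [StarOrderedRing 𝒜]

lemma spectrum_subset_Icc_of_smul_one_le {a : 𝒜} {m M : ℝ} (ha : IsSelfAdjoint a)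
    (hm : m • 1 ≤ a) (hM : a ≤ M • 1) : spectrum ℝ a ⊆ Set.Icc m M := by
  rw [← Algebra.algebraMap_eq_smul_one] at hm hM
  exact fun x hx => ⟨(algebraMap_le_iff_le_spectrum ha).1 hm x hx,
    (le_algebraMap_iff_spectrum_le ha).1 hM x hx⟩

lemma ringInverse_half_one_add_ringInverse {a : 𝒜} (ha : IsStrictlyPositive a) :
    (((1 : ℝ) / 2) • (1 + a⁻¹ʳ))⁻¹ʳ = cfc (fun x : ℝ => 2 * x / (1 + x)) a := by
  have hpos : ∀ x ∈ spectrum ℝ a, 0 < x := fun x hx => ha.spectrum_pos hx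
  have hcont : ContinuousOn (fun x : ℝ => x⁻¹) (spectrum ℝ a) :=
    continuousOn_inv₀.mono fun x hx => (hpos x hx).ne'
  have hmean :
      ((1 : ℝ) / 2) • (1 + a⁻¹ʳ) = cfc (fun x : ℝ => 1 / 2 * (1 + x⁻¹)) a := by
    rw [cfc_const_mul .., cfc_add .., cfc_const_one ..,
      ← cfc_ringInverse_id (R := ℝ) (a := a) ha.isUnit]
  rw [hmean, ← cfc_inv _ _ fun x hx => by have := hpos x hx; positivity]
  refine cfc_congr fun x hx => ?_
  have := hpos x hx
  field_simp
  ring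

lemma conjSqrt_ringInverse_smul_self {a : 𝒜} (ha : IsStrictlyPositive a) (m : ℝ) :
    conjSqrt a⁻¹ʳ (m • a) = m • 1 := by
  rw [map_smul, conjSqrt_ringInverse_self a]

lemma spectrum_conjSqrt_ringInverse_subset_Icc {a b : 𝒜} {m M : ℝ} (ha : IsStrictlyPositive a)
    (hb : IsStrictlyPositive b) (h₁ : m • a ≤ b) (h₂ : b ≤ M • a) :
    spectrum ℝ (conjSqrt a⁻¹ʳ b) ⊆ Set.Icc m M := by
  have hT := (isStrictlyPositive_conjSqrt_iff _ b ha.ringInverse).2 hb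
  refine spectrum_subset_Icc_of_smul_one_le hT.isSelfAdjoint ?_ ?_
  · simpa only [conjSqrt_ringInverse_smul_self ha] using conjSqrt_le_conjSqrt (c := a⁻¹ʳ) h₁
  · simpa only [conjSqrt_ringInverse_smul_self ha] using conjSqrt_le_conjSqrt (c := a⁻¹ʳ) h₂

lemma smul_add_smul_eq_conjSqrt_cfc {a b : 𝒜} (ha : IsStrictlyPositive a)
    (hb : IsSelfAdjoint b) (c d : ℝ) :
    c • (b + d • a) = conjSqrt a (cfc (fun x : ℝ => c * (x + d)) (conjSqrt a⁻¹ʳ b)) := by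
  have hT : IsSelfAdjoint (conjSqrt a⁻¹ʳ b) := by
    rw [conjSqrt_apply]
    exact hb.conjugate_self (by cfc_tac)
  rw [← smul_add_smul_one_eq_cfc _ _ _ hT, map_smul, map_add, map_smul, conjSqrt_one _ ha.nonneg,
    conjSqrt_conjSqrt_ringInverse _ _ ha]

end CStarAlgebra

lemma harmMean_eq_conjSqrt_cfc {A B : H →L[ℂ] H} (hA : IsStrictlyPositive A)
    (hB : IsStrictlyPositive B) :
    harmMean A B = conjSqrt A (cfc (fun x : ℝ => 2 * x / (1 + x)) (conjSqrt A⁻¹ʳ B)) := by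
  have hT := (isStrictlyPositive_conjSqrt_iff _ B hA.ringInverse).2 hB
  rw [← ringInverse_half_one_add_ringInverse hT]
  calc harmMean A B = (conjSqrt A⁻¹ʳ (((1 : ℝ) / 2) • (1 + (conjSqrt A⁻¹ʳ B)⁻¹ʳ)))⁻¹ʳ := by
        rw [map_smul, map_add, conjSqrt_one _ hA.ringInverse.nonneg,
          ← ringInverse_conjSqrt _ _ hA, conjSqrt_conjSqrt_ringInverse _ _ hA]
        rfl
    _ = _ := by rw [ringInverse_conjSqrt _ _ hA.ringInverse, inverse_inverse hA.isUnit]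

lemma smul_add_smul_le_harmMean {A B : H →L[ℂ] H} {m M c d : ℝ} (hm : 0 < m)
    (hA : IsStrictlyPositive A) (h₁ : m • A ≤ B) (h₂ : B ≤ M • A)
    (h : ∀ x ∈ Set.Icc m M, c * (x + d) ≤ 2 * x / (1 + x)) :
    c • (B + d • A) ≤ harmMean A B := by
  have hB : IsStrictlyPositive B := (hA.smul hm).of_le h₁
  have hspec := spectrum_conjSqrt_ringInverse_subset_Icc hA hB h₁ h₂
  rw [smul_add_smul_eq_conjSqrt_cfc hA hB.isSelfAdjoint, harmMean_eq_conjSqrt_cfc hA hB]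
  refine conjSqrt_le_conjSqrt (cfc_mono (fun x hx => h x (hspec hx)) (by fun_prop) ?_)
  exact ContinuousOn.div (by fun_prop) (by fun_prop) fun x hx => by linarith [(hspec hx).1]

lemma harmMean_le_smul_add_smul {A B : H →L[ℂ] H} {m M c d : ℝ} (hm : 0 < m)
    (hA : IsStrictlyPositive A) (h₁ : m • A ≤ B) (h₂ : B ≤ M • A)
    (h : ∀ x ∈ Set.Icc m M, 2 * x / (1 + x) ≤ c * (x + d)) :
    harmMean A B ≤ c • (B + d • A) := by
  have hB : IsStrictlyPositive B := (hA.smul hm).of_le h₁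
  have hspec := spectrum_conjSqrt_ringInverse_subset_Icc hA hB h₁ h₂
  rw [smul_add_smul_eq_conjSqrt_cfc hA hB.isSelfAdjoint, harmMean_eq_conjSqrt_cfc hA hB]
  refine conjSqrt_le_conjSqrt (cfc_mono (fun x hx => h x (hspec hx)) ?_ (by fun_prop))
  exact ContinuousOn.div (by fun_prop) (by fun_prop) fun x hx => by linarith [(hspec hx).1]

theorem reverse_harmonic_mean_sum_general
    (m M : ℝ) (hm : 0 < m) (hmM : m < M)
    (n : ℕ) (A B : Fin n → (H →L[ℂ] H))
    (hA : ∀ j, 0 ≤ A j) (hAu : ∀ j, IsUnit (A j))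
    (h1 : ∀ j, m • A j ≤ B j) (h2 : ∀ j, B j ≤ M • A j) :
    harmMean (∑ j, A j) (∑ j, B j) ≤
      ((1 + M) * (1 + m) / (1 + Real.sqrt (M * m)) ^ 2) •
        ∑ j, harmMean (A j) (B j) := by
  obtain _ | n := n
  · simp [harmMean]
  have hApos j : IsStrictlyPositive (A j) := (hAu j).isStrictlyPositive (hA j)
  have hsum : IsStrictlyPositive (∑ j, A j) := by
    rw [Fin.sum_univ_succ]
    exact (hApos 0).add_nonneg (Finset.sum_nonneg fun j _ => hA _)
  have hM : 0 < 1 + M := by linarith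
  set r := Real.sqrt (M * m)
  have hr : r ^ 2 = m * M := by rw [Real.sq_sqrt (by nlinarith), mul_comm]
  have hupper := harmMean_le_smul_add_smul (c := 2 / (1 + r) ^ 2) (d := m * M) hm hsum
    (by simpa only [Finset.smul_sum] using Finset.sum_le_sum fun j _ => h1 j)
    (by simpa only [Finset.smul_sum] using Finset.sum_le_sum fun j _ => h2 j)
    fun x hx => hr ▸ two_mul_div_one_add_le_tangent (Real.sqrt_nonneg _) (by linarith [hx.1])
  have hlower j := smul_add_smul_le_harmMean (c := 2 / ((1 + m) * (1 + M))) (d := m * M) hm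
    (hApos j) (h1 j) (h2 j) fun x hx => chord_le_two_mul_div_one_add (by linarith) hx.1 hx.2
  calc harmMean (∑ j, A j) (∑ j, B j)
      ≤ (2 / (1 + r) ^ 2) • (∑ j, B j + (m * M) • ∑ j, A j) := hupper
    _ = ((1 + M) * (1 + m) / (1 + r) ^ 2) •
          ∑ j, (2 / ((1 + m) * (1 + M))) • (B j + (m * M) • A j) := by
      rw [← Finset.smul_sum, smul_smul, Finset.sum_add_distrib, ← Finset.smul_sum]
      congr 1
      field_simp
    _ ≤ _ := smul_le_smul_of_nonneg_left (Finset.sum_le_sum fun j _ => hlower j)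
      (div_nonneg (by positivity) (sq_nonneg _))

/-- Reverse inequality for the harmonic mean of sums:
`((1+M)(1+m)/(1+√(Mm))²) · Σ (A_j ! B_j) ≥ (Σ A_j) ! (Σ B_j)`
whenever `0 < mA_j ≤ B_j ≤ MA_j`. -/
theorem reverse_harmonic_mean_sum
    (m M : ℝ) (hm : 0 < m) (hmM : m < M)
    (n : ℕ) (A B : Fin n → (H →L[ℂ] H))
    (hA : ∀ j, 0 ≤ A j) (hAu : ∀ j, IsUnit (A j))
    (hB : ∀ j, 0 ≤ B j) (hBu : ∀ j, IsUnit (B j))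
    (h1 : ∀ j, m • A j ≤ B j) (h2 : ∀ j, B j ≤ M • A j) :
    harmMean (∑ j, A j) (∑ j, B j) ≤
      ((1 + M) * (1 + m) / (1 + Real.sqrt (M * m)) ^ 2) •
        ∑ j, harmMean (A j) (B j) :=
  reverse_harmonic_mean_sum_general m M hm hmM n A B hA hAu h1 h2
end

section
/- Let 0 < m < M, let α ∈ [0,1], and let A_j, B_j (1 ≤ j ≤ n) be positive invertible bounded operators on a complex Hilbert space with m A_j ≤ B_j ≤ M A_j for all j. Then ((√M + √m)/(2 (Mm)^{1/4})) · Σ_{j=1}^n (A_j ♯ B_j) ≥ (Σ_{j=1}^n A_j ♯_α B_j) ♯ (Σ_{j=1}^n A_j ♯_{1−α} B_j). -/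
variable {H : Type*} [NormedAddCommGroup H] [InnerProductSpace ℂ H] [CompleteSpace H]

/-!
With `C = A^{-1/2} B A^{-1/2}`, whose spectrum lies in `[m, M]`, all the means involved are
operator perspectives `A^{1/2} f(C) A^{1/2}`, so scalar inequalities for `f` on `[m, M]` transfer
to them. For `s = 1/2 - α` and `u = t^s` the chord bound `(u - m^s)(u - M^s) ≤ 0` gives
`(mM)^s (A ♯_α B) + A ♯_{1-α} B ≤ (m^s + M^s) (A ♯ B)`. Summing over `j` and using the AM–GM
inequality `τ (X ♯ Y) ≤ (τ² X + Y)/2` with `τ = (mM)^{s/2}` yields the bound with constant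
`(m^s + M^s) / (2 (mM)^{s/2}) = cosh (s/2 · log (M/m))`; as `|s| ≤ 1/2`, it is at most its
value at `s = 1/2`, the constant of the theorem.
-/

open CFC

lemma rpow_sub_rpow_mul_rpow_sub_rpow_nonpos {m t M : ℝ} (hm : 0 < m) (hmt : m ≤ t) (htM : t ≤ M)
    (s : ℝ) : (t ^ s - m ^ s) * (t ^ s - M ^ s) ≤ 0 := by
  have ht := hm.trans_le hmt
  rcases le_total 0 s with hs | hs
  · exact mul_nonpos_of_nonneg_of_nonpos (sub_nonneg.2 (Real.rpow_le_rpow hm.le hmt hs))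
      (sub_nonpos.2 (Real.rpow_le_rpow ht.le htM hs))
  · exact mul_nonpos_of_nonpos_of_nonneg (sub_nonpos.2 (Real.rpow_le_rpow_of_nonpos hm hmt hs))
      (sub_nonneg.2 (Real.rpow_le_rpow_of_nonpos ht htM hs))

lemma mul_rpow_add_rpow_le_of_mem_Icc {m t M : ℝ} (hm : 0 < m) (hmt : m ≤ t) (htM : t ≤ M)
    (α : ℝ) : (m * M) ^ (1/2 - α) * t ^ α + t ^ (1 - α) ≤
      (m ^ (1/2 - α) + M ^ (1/2 - α)) * t ^ (1/2 : ℝ) := by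
  have ht := hm.trans_le hmt
  have hM := ht.trans_le htM
  set s := 1/2 - α
  have hu : 0 < t ^ s := Real.rpow_pos_of_pos ht s
  have hr : 0 ≤ t ^ (1/2 : ℝ) := Real.rpow_nonneg ht.le _
  have hα : t ^ α = t ^ (1/2 : ℝ) / t ^ s := by
    rw [eq_div_iff hu.ne', ← Real.rpow_add ht, add_sub_cancel]
  have h1α : t ^ (1 - α) = t ^ (1/2 : ℝ) * t ^ s := by
    rw [← Real.rpow_add ht]; congr 1; ring
  have hchord : (m * M) ^ s * t ^ α + t ^ (1 - α) - (m ^ s + M ^ s) * t ^ (1/2 : ℝ) =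
      t ^ (1/2 : ℝ) * ((t ^ s - m ^ s) * (t ^ s - M ^ s)) / t ^ s := by
    rw [Real.mul_rpow hm.le hM.le, hα, h1α]
    field_simp
    ring
  exact sub_nonpos.1 (hchord ▸ div_nonpos_of_nonpos_of_nonneg (mul_nonpos_of_nonneg_of_nonpos hr
    (rpow_sub_rpow_mul_rpow_sub_rpow_nonpos hm hmt htM s)) hu.le)

lemma rpow_add_rpow_div_eq_two_mul_cosh {m M : ℝ} (hm : 0 < m) (hM : 0 < M) (s : ℝ) :
    (m ^ s + M ^ s) / (m * M) ^ (s / 2) = 2 * Real.cosh (s / 2 * Real.log (M / m)) := by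
  rw [Real.cosh_eq, Real.rpow_def_of_pos hm, Real.rpow_def_of_pos hM,
    Real.rpow_def_of_pos (mul_pos hm hM), Real.log_mul hm.ne' hM.ne', Real.log_div hM.ne' hm.ne',
    add_div, ← Real.exp_sub, ← Real.exp_sub]
  ring_nf

lemma rpow_add_rpow_div_le {m M s r : ℝ} (hm : 0 < m) (hM : 0 < M) (hsr : |s| ≤ r) :
    (m ^ s + M ^ s) / (m * M) ^ (s / 2) ≤ (m ^ r + M ^ r) / (m * M) ^ (r / 2) := by
  rw [rpow_add_rpow_div_eq_two_mul_cosh hm hM, rpow_add_rpow_div_eq_two_mul_cosh hm hM,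
    mul_le_mul_iff_right₀ two_pos, Real.cosh_le_cosh, abs_mul, abs_mul, abs_div, abs_div]
  exact mul_le_mul_of_nonneg_right
    (div_le_div_of_nonneg_right (hsr.trans (le_abs_self r)) (abs_nonneg _)) (abs_nonneg _)

lemma rpow_add_rpow_div_le_sqrt_add_sqrt {m M s : ℝ} (hm : 0 < m) (hM : 0 < M) (hs : |s| ≤ 1/2) :
    (m ^ s + M ^ s) / (2 * (m * M) ^ (s / 2)) ≤
      (Real.sqrt M + Real.sqrt m) / (2 * (M * m) ^ ((1 : ℝ)/4)) :=
  calc (m ^ s + M ^ s) / (2 * (m * M) ^ (s / 2)) = (m ^ s + M ^ s) / (m * M) ^ (s / 2) / 2 := by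
        rw [div_div, mul_comm 2]
    _ ≤ (m ^ (1/2 : ℝ) + M ^ (1/2 : ℝ)) / (m * M) ^ ((1/2 : ℝ) / 2) / 2 :=
        div_le_div_of_nonneg_right (rpow_add_rpow_div_le hm hM hs) zero_le_two
    _ = _ := by rw [Real.sqrt_eq_rpow, Real.sqrt_eq_rpow, mul_comm M m]; ring_nf

section OpRpow

variable {p : H →L[ℂ] H}

lemma opRpow_eq_rpow (hp : 0 ≤ p) (r : ℝ) : opRpow p r = p ^ r :=
  (rpow_eq_cfc_real hp).symm

lemma isSelfAdjoint_opRpow (p : H →L[ℂ] H) (r : ℝ) : IsSelfAdjoint (opRpow p r) :=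
  cfc_predicate _ p

lemma opRpow_nonneg (hp : 0 ≤ p) (r : ℝ) : 0 ≤ opRpow p r :=
  opRpow_eq_rpow hp r ▸ rpow_nonneg

lemma isUnit_opRpow (hp : IsStrictlyPositive p) (r : ℝ) : IsUnit (opRpow p r) :=
  opRpow_eq_rpow hp.nonneg r ▸ hp.isUnit.cfcRpow r hp.nonneg

lemma zero_opRpow {r : ℝ} (hr : r ≠ 0) : opRpow (0 : H →L[ℂ] H) r = 0 := by
  rw [opRpow_eq_rpow le_rfl, ← rpow_eq_pow, zero_rpow hr]

lemma opRpow_half_mul_self (hp : 0 ≤ p) : opRpow p (1/2) * opRpow p (1/2) = p := by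
  rw [opRpow_eq_rpow hp, ← sqrt_eq_rpow, sqrt_mul_sqrt_self p hp]

lemma opRpow_half_mul_opRpow_neg_half (hp : IsStrictlyPositive p) :
    opRpow p (1/2) * opRpow p (-(1/2)) = 1 := by
  rw [opRpow_eq_rpow hp.nonneg, opRpow_eq_rpow hp.nonneg]
  exact rpow_mul_rpow_neg _ hp

lemma opRpow_neg_half_mul_opRpow_half (hp : IsStrictlyPositive p) :
    opRpow p (-(1/2)) * opRpow p (1/2) = 1 := by
  rw [opRpow_eq_rpow hp.nonneg, opRpow_eq_rpow hp.nonneg]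
  exact rpow_neg_mul_rpow _ hp

end OpRpow

noncomputable def invSqrtConj (p q : H →L[ℂ] H) : H →L[ℂ] H :=
  opRpow p (-(1/2)) * q * opRpow p (-(1/2))

section InvSqrtConj

variable {p q : H →L[ℂ] H}

lemma invSqrtConj_self (hp : IsStrictlyPositive p) : invSqrtConj p p = 1 := by
  rw [invSqrtConj, opRpow_eq_rpow hp.nonneg]
  exact conjugate_rpow_neg_one_half p hp

lemma opRpow_half_conj_invSqrtConj (hp : IsStrictlyPositive p) (q : H →L[ℂ] H) :
    opRpow p (1/2) * invSqrtConj p q * opRpow p (1/2) = q := by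
  simp only [invSqrtConj, ← mul_assoc, opRpow_half_mul_opRpow_neg_half hp, one_mul]
  rw [mul_assoc, opRpow_neg_half_mul_opRpow_half hp, mul_one]

lemma isSelfAdjoint_invSqrtConj (hq : IsSelfAdjoint q) : IsSelfAdjoint (invSqrtConj p q) := by
  have h := hq.conjugate (opRpow p (-(1/2)))
  rwa [(isSelfAdjoint_opRpow p _).star_eq] at h

lemma isStrictlyPositive_invSqrtConj (hp : IsStrictlyPositive p) (hq : IsStrictlyPositive q) :
    IsStrictlyPositive (invSqrtConj p q) :=
  IsStrictlyPositive.conjugate_of_isUnit_of_isSelfAdjoint _ _ (isUnit_opRpow hp _)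
    (isSelfAdjoint_opRpow p _) hq

lemma invSqrtConj_nonneg (hp : 0 ≤ p) (hq : 0 ≤ q) : 0 ≤ invSqrtConj p q :=
  conjugate_nonneg_of_nonneg hq (opRpow_nonneg hp _)

lemma invSqrtConj_smul (p q : H →L[ℂ] H) (c : ℝ) : invSqrtConj p (c • q) = c • invSqrtConj p q := by
  simp only [invSqrtConj, smul_mul_assoc, mul_smul_comm]

lemma spectrum_invSqrtConj_subset_Icc (hp : IsStrictlyPositive p) (hq : IsSelfAdjoint q)
    {m M : ℝ} (hmq : m • p ≤ q) (hqM : q ≤ M • p) :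
    spectrum ℝ (invSqrtConj p q) ⊆ Set.Icc m M := by
  have hconj {a b : H →L[ℂ] H} (hab : a ≤ b) : invSqrtConj p a ≤ invSqrtConj p b :=
    conjugate_le_conjugate_of_nonneg hab (opRpow_nonneg hp.nonneg _)
  have hm := hconj hmq
  have hM := hconj hqM
  rw [invSqrtConj_smul, invSqrtConj_self hp, ← Algebra.algebraMap_eq_smul_one] at hm hM
  exact fun x hx => ⟨(algebraMap_le_iff_le_spectrum (isSelfAdjoint_invSqrtConj hq)).1 hm x hx,
    (le_algebraMap_iff_spectrum_le (isSelfAdjoint_invSqrtConj hq)).1 hM x hx⟩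

end InvSqrtConj

noncomputable def opPersp (f : ℝ → ℝ) (p q : H →L[ℂ] H) : H →L[ℂ] H :=
  opRpow p (1/2) * cfc f (invSqrtConj p q) * opRpow p (1/2)

section OpPersp

variable {p q : H →L[ℂ] H} {f g : ℝ → ℝ}

lemma wgm_eq_opPersp (μ : ℝ) (p q : H →L[ℂ] H) : wgm μ p q = opPersp (· ^ μ) p q := rfl

lemma opPersp_le_opPersp (hp : 0 ≤ p) (hq : IsSelfAdjoint q)
    (hf : ContinuousOn f (spectrum ℝ (invSqrtConj p q)))
    (hg : ContinuousOn g (spectrum ℝ (invSqrtConj p q)))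
    (hfg : ∀ x ∈ spectrum ℝ (invSqrtConj p q), f x ≤ g x) : opPersp f p q ≤ opPersp g p q :=
  conjugate_le_conjugate_of_nonneg
    ((cfc_le_iff f g _ hf hg (isSelfAdjoint_invSqrtConj hq)).2 hfg) (opRpow_nonneg hp _)

lemma isStrictlyPositive_opPersp (hp : IsStrictlyPositive p) (hq : IsSelfAdjoint q)
    (hf : ContinuousOn f (spectrum ℝ (invSqrtConj p q)))
    (hf_pos : ∀ x ∈ spectrum ℝ (invSqrtConj p q), 0 < f x) :
    IsStrictlyPositive (opPersp f p q) :=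
  IsStrictlyPositive.conjugate_of_isUnit_of_isSelfAdjoint _ _ (isUnit_opRpow hp _)
    (isSelfAdjoint_opRpow p _)
    ((cfc_isStrictlyPositive_iff f _ hf (isSelfAdjoint_invSqrtConj hq)).2 hf_pos)

lemma opPersp_add (hf : ContinuousOn f (spectrum ℝ (invSqrtConj p q)))
    (hg : ContinuousOn g (spectrum ℝ (invSqrtConj p q))) :
    opPersp (fun x => f x + g x) p q = opPersp f p q + opPersp g p q := by
  simp only [opPersp, cfc_add _ f g hf hg, mul_add, add_mul]

lemma opPersp_const_mul (c : ℝ) (hf : ContinuousOn f (spectrum ℝ (invSqrtConj p q))) :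
    opPersp (fun x => c * f x) p q = c • opPersp f p q := by
  simp only [opPersp, cfc_const_mul c f _ hf, mul_smul_comm, smul_mul_assoc]

lemma opPersp_affine (hp : IsStrictlyPositive p) (hq : IsSelfAdjoint q) (a b : ℝ) :
    opPersp (fun x => a + b * x) p q = a • p + b • q := by
  have hC := isSelfAdjoint_invSqrtConj (p := p) hq
  rw [opPersp, cfc_const_add a _ _ (by fun_prop) hC, cfc_const_mul b _ _ (by fun_prop),
    cfc_id' ℝ _ hC, Algebra.algebraMap_eq_smul_one]
  simp only [mul_add, add_mul, mul_smul_comm, smul_mul_assoc, mul_one,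
    opRpow_half_conj_invSqrtConj hp, opRpow_half_mul_self hp.nonneg]

end OpPersp

section Means

variable {p q : H →L[ℂ] H}

lemma geomMean_zero_left (q : H →L[ℂ] H) : geomMean 0 q = 0 := by
  rw [geomMean, wgm, zero_opRpow (by norm_num), zero_mul, zero_mul]

lemma isStrictlyPositive_wgm (hp : IsStrictlyPositive p) (hq : IsStrictlyPositive q) (μ : ℝ) :
    IsStrictlyPositive (wgm μ p q) := by
  have hpos : ∀ x ∈ spectrum ℝ (invSqrtConj p q), 0 < x := fun _ hx =>
    (isStrictlyPositive_invSqrtConj hp hq).spectrum_pos hx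
  exact isStrictlyPositive_opPersp hp hq.isSelfAdjoint
    (continuousOn_id.rpow_const fun x hx => Or.inl (hpos x hx).ne')
    fun x hx => Real.rpow_pos_of_pos (hpos x hx) μ

lemma smul_geomMean_le (hp : IsStrictlyPositive p) (hq : 0 ≤ q) (τ : ℝ) :
    τ • geomMean p q ≤ (τ ^ 2 / 2) • p + (1 / 2 : ℝ) • q := by
  have hC := invSqrtConj_nonneg hp.nonneg hq
  have hcont : ContinuousOn (· ^ (1/2 : ℝ)) (spectrum ℝ (invSqrtConj p q)) :=
    (Real.continuous_rpow_const (by norm_num)).continuousOn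
  rw [geomMean, wgm_eq_opPersp, ← opPersp_const_mul τ hcont,
    ← opPersp_affine hp hq.isSelfAdjoint (τ ^ 2 / 2) (1 / 2)]
  refine opPersp_le_opPersp hp.nonneg hq.isSelfAdjoint (continuousOn_const.mul hcont)
    (by fun_prop) fun x hx => ?_
  have hx : 0 ≤ x := spectrum_nonneg_of_nonneg hC hx
  rw [← Real.sqrt_eq_rpow]
  nlinarith [sq_nonneg (τ - √x), Real.sq_sqrt hx]

lemma smul_wgm_add_wgm_le_smul_geomMean (hp : IsStrictlyPositive p) (hq : IsSelfAdjoint q)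
    {m M : ℝ} (hm : 0 < m) (hmq : m • p ≤ q) (hqM : q ≤ M • p) (α : ℝ) :
    (m * M) ^ (1/2 - α) • wgm α p q + wgm (1 - α) p q ≤
      (m ^ (1/2 - α) + M ^ (1/2 - α)) • geomMean p q := by
  have hspec := spectrum_invSqrtConj_subset_Icc hp hq hmq hqM
  have hcont (r : ℝ) : ContinuousOn (· ^ r) (spectrum ℝ (invSqrtConj p q)) :=
    continuousOn_id.rpow_const fun x hx => Or.inl (hm.trans_le (hspec hx).1).ne'
  have hconst_mul (c r : ℝ) : ContinuousOn (fun x => c * x ^ r) (spectrum ℝ (invSqrtConj p q)) :=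
    continuousOn_const.mul (hcont r)
  calc (m * M) ^ (1/2 - α) • wgm α p q + wgm (1 - α) p q
      = opPersp (fun x => (m * M) ^ (1/2 - α) * x ^ α + x ^ (1 - α)) p q := by
        rw [opPersp_add (hconst_mul _ α) (hcont _), opPersp_const_mul _ (hcont α)]; rfl
    _ ≤ opPersp (fun x => (m ^ (1/2 - α) + M ^ (1/2 - α)) * x ^ (1/2 : ℝ)) p q :=
        opPersp_le_opPersp hp.nonneg hq ((hconst_mul _ α).add (hcont _)) (hconst_mul _ _)
          fun x hx => mul_rpow_add_rpow_le_of_mem_Icc hm (hspec hx).1 (hspec hx).2 α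
    _ = (m ^ (1/2 - α) + M ^ (1/2 - α)) • geomMean p q := opPersp_const_mul _ (hcont _)

lemma geomMean_le_smul_of_sq_smul_add_le {x y g : H →L[ℂ] H} (hx : IsStrictlyPositive x)
    (hy : 0 ≤ y) {τ σ : ℝ} (hτ : 0 < τ) (h : τ ^ 2 • x + y ≤ σ • g) :
    geomMean x y ≤ (σ / (2 * τ)) • g :=
  calc geomMean x y = τ⁻¹ • τ • geomMean x y := (inv_smul_smul₀ hτ.ne' _).symm
    _ ≤ τ⁻¹ • ((τ ^ 2 / 2) • x + (1 / 2 : ℝ) • y) :=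
        smul_le_smul_of_nonneg_left (smul_geomMean_le hx hy τ) (inv_nonneg.2 hτ.le)
    _ = (2 * τ)⁻¹ • (τ ^ 2 • x + y) := by module
    _ ≤ (2 * τ)⁻¹ • (σ • g) := smul_le_smul_of_nonneg_left h (by positivity)
    _ = (σ / (2 * τ)) • g := by rw [smul_smul, div_eq_inv_mul]

end Means

theorem reverse_callebaut_left_general
    (m M : ℝ) (hm : 0 < m) (hmM : m < M)
    (α : ℝ) (hα : α ∈ Set.Icc (0 : ℝ) 1)
    (n : ℕ) (A B : Fin n → (H →L[ℂ] H))
    (hA : ∀ j, 0 ≤ A j) (hAu : ∀ j, IsUnit (A j))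
    (h1 : ∀ j, m • A j ≤ B j) (h2 : ∀ j, B j ≤ M • A j) :
    geomMean (∑ j, wgm α (A j) (B j)) (∑ j, wgm (1 - α) (A j) (B j)) ≤
      ((Real.sqrt M + Real.sqrt m) / (2 * (M * m) ^ ((1 : ℝ)/4))) •
        ∑ j, geomMean (A j) (B j) := by
  have hM : 0 < M := hm.trans hmM
  rcases isEmpty_or_nonempty (Fin n) with hn | ⟨⟨j₀⟩⟩
  · simp [Finset.univ_eq_empty, geomMean_zero_left]
  have hApos j : IsStrictlyPositive (A j) := (hAu j).isStrictlyPositive (hA j)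
  have hBpos j : IsStrictlyPositive (B j) := ((hApos j).smul hm).of_le (h1 j)
  have hwgm j μ : IsStrictlyPositive (wgm μ (A j) (B j)) :=
    isStrictlyPositive_wgm (hApos j) (hBpos j) μ
  have hx : IsStrictlyPositive (∑ j, wgm α (A j) (B j)) :=
    (hwgm j₀ α).of_le (Finset.single_le_sum (fun j _ => (hwgm j α).nonneg) (Finset.mem_univ j₀))
  have hτ : 0 < (m * M) ^ ((1/2 - α) / 2) := Real.rpow_pos_of_pos (mul_pos hm hM) _
  have hτ_sq : ((m * M) ^ ((1/2 - α) / 2)) ^ 2 = (m * M) ^ (1/2 - α) := by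
    rw [← Real.rpow_natCast, ← Real.rpow_mul (mul_pos hm hM).le]; ring_nf
  have hy : 0 ≤ ∑ j, wgm (1 - α) (A j) (B j) := Finset.sum_nonneg fun j _ => (hwgm j _).nonneg
  have hg : 0 ≤ ∑ j, geomMean (A j) (B j) := Finset.sum_nonneg fun j _ => (hwgm j _).nonneg
  have hs : |1/2 - α| ≤ 1/2 := abs_le.2 ⟨by linarith [hα.2], by linarith [hα.1]⟩
  refine (geomMean_le_smul_of_sq_smul_add_le hx hy hτ ?_).trans
    (smul_le_smul_of_nonneg_right (rpow_add_rpow_div_le_sqrt_add_sqrt hm hM hs) hg)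
  rw [hτ_sq, Finset.smul_sum, Finset.smul_sum, ← Finset.sum_add_distrib]
  exact Finset.sum_le_sum fun j _ => smul_wgm_add_wgm_le_smul_geomMean (hApos j)
    (hBpos j).isSelfAdjoint hm (h1 j) (h2 j) α

/-- `((√M + √m)/(2(Mm)^{1/4})) · Σ (A_j ♯ B_j) ≥ (Σ A_j ♯_α B_j) ♯ (Σ A_j ♯_{1−α} B_j)`
whenever `0 < mA_j ≤ B_j ≤ MA_j` and `α ∈ [0,1]`. -/
theorem reverse_callebaut_left
    (m M : ℝ) (hm : 0 < m) (hmM : m < M)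
    (α : ℝ) (hα : α ∈ Set.Icc (0 : ℝ) 1)
    (n : ℕ) (A B : Fin n → (H →L[ℂ] H))
    (hA : ∀ j, 0 ≤ A j) (hAu : ∀ j, IsUnit (A j))
    (hB : ∀ j, 0 ≤ B j) (hBu : ∀ j, IsUnit (B j))
    (h1 : ∀ j, m • A j ≤ B j) (h2 : ∀ j, B j ≤ M • A j) :
    geomMean (∑ j, wgm α (A j) (B j)) (∑ j, wgm (1 - α) (A j) (B j)) ≤
      ((Real.sqrt M + Real.sqrt m) / (2 * (M * m) ^ ((1 : ℝ)/4))) •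
        ∑ j, geomMean (A j) (B j) :=
  reverse_callebaut_left_general m M hm hmM α hα n A B hA hAu h1 h2
end

section
/- Let a, b > 0 be real numbers and let ν be a real number with ν ∉ [0,1]. Then ν a + (1 − ν) b + (ν − 1)(√a − √b)² ≤ a^ν b^{1−ν}. -/
/-! The substitution `p = 2 - 2ν` turns the claim into the reverse weighted AM–GM inequality
`(1 - p) x + p y ≤ x ^ (1 - p) * y ^ p` for `x = a`, `y = √(ab)`, which holds because `p ∉ (0, 1)`.
Dividing by `x`, that is Bernoulli's inequality `1 + p (t - 1) ≤ t ^ p`, true for `p ≥ 1` by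
convexity and for `p ≤ 0` via `log t ≤ t - 1` and `1 + s ≤ exp s`. -/

namespace Real

theorem one_add_mul_sub_one_le_rpow_of_nonpos {t p : ℝ} (ht : 0 < t) (hp : p ≤ 0) :
    1 + p * (t - 1) ≤ t ^ p :=
  calc 1 + p * (t - 1) ≤ 1 + p * log t := by
        nlinarith [log_le_sub_one_of_pos ht]
    _ ≤ exp (p * log t) := by linarith [add_one_le_exp (p * log t)]
    _ = t ^ p := by rw [rpow_def_of_pos ht, mul_comm]

theorem one_add_mul_sub_one_le_rpow {t p : ℝ} (ht : 0 < t) (hp : p ∉ Set.Ioo 0 1) :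
    1 + p * (t - 1) ≤ t ^ p := by
  rcases le_or_gt p 0 with hp0 | hp0
  · exact one_add_mul_sub_one_le_rpow_of_nonpos ht hp0
  · have hp1 : 1 ≤ p := not_lt.mp fun h ↦ hp ⟨hp0, h⟩
    simpa using one_add_mul_self_le_rpow_one_add (s := t - 1) (by linarith) hp1

theorem one_sub_mul_add_mul_le_rpow_mul_rpow {x y p : ℝ} (hx : 0 < x) (hy : 0 < y)
    (hp : p ∉ Set.Ioo 0 1) :
    (1 - p) * x + p * y ≤ x ^ (1 - p) * y ^ p :=
  calc (1 - p) * x + p * y = x * (1 + p * (y / x - 1)) := by field_simp; ring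
    _ ≤ x * (y / x) ^ p := by
        gcongr
        exact one_add_mul_sub_one_le_rpow (div_pos hy hx) hp
    _ = x ^ (1 - p) * y ^ p := by
        rw [div_rpow hy.le hx.le, rpow_sub hx, rpow_one]
        field_simp

end Real

/-- For `a, b > 0` and `ν ∉ [0,1]`:
`ν a + (1 − ν) b + (ν − 1)(√a − √b)² ≤ a^ν b^{1−ν}`. -/
theorem young_type_refinement (a b ν : ℝ) (ha : 0 < a) (hb : 0 < b)
    (hν : ν ∉ Set.Icc (0 : ℝ) 1) :
    ν * a + (1 - ν) * b + (ν - 1) * (Real.sqrt a - Real.sqrt b) ^ 2 ≤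
      a ^ ν * b ^ (1 - ν) := by
  have hp : 2 - 2 * ν ∉ Set.Ioo 0 1 := fun ⟨h₀, h₁⟩ ↦ hν ⟨by linarith, by linarith⟩
  have hlhs : ν * a + (1 - ν) * b + (ν - 1) * (Real.sqrt a - Real.sqrt b) ^ 2 =
      (1 - (2 - 2 * ν)) * a + (2 - 2 * ν) * Real.sqrt (a * b) := by
    rw [Real.sqrt_mul ha.le]
    linear_combination (ν - 1) * (Real.sq_sqrt ha.le + Real.sq_sqrt hb.le)
  have hrhs : a ^ (1 - (2 - 2 * ν)) * Real.sqrt (a * b) ^ (2 - 2 * ν) = a ^ ν * b ^ (1 - ν) := by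
    rw [Real.sqrt_eq_rpow, ← Real.rpow_mul (by positivity), Real.mul_rpow ha.le hb.le,
      ← mul_assoc, ← Real.rpow_add ha]
    ring_nf
  rw [hlhs, ← hrhs]
  exact Real.one_sub_mul_add_mul_le_rpow_mul_rpow ha (by positivity) hp
end

section
/- Let a, b > 0 be real numbers and let ν be a real number with ν ∉ [0,1]. Then (a + b) + 2(ν − 1)(√a − √b)² ≤ a^ν b^{1−ν} + b^ν a^{1−ν}. -/
/-!
Write `a = g e^d`, `b = g e^{-d}` with `g = √(ab)`. Then `a + b = 2g cosh d`,
`(√a - √b)² = 2g (cosh d - 1)` and the right-hand side is `2g cosh (s d)` with `s = 2ν - 1`,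
so the inequality becomes `s (cosh d - 1) ≤ cosh (s d) - 1`. For `s ≤ 0` the left side is
nonpositive and the right side nonnegative; for `s ≥ 1` it is the chord inequality
`s (f x - f 0) ≤ f (s x) - f 0` of the convex function `cosh`.
-/

open Real Set

theorem ConvexOn.mul_sub_map_zero_le_of_one_le {E : Type*} [AddCommGroup E] [Module ℝ E]
    {S : Set E} {f : E → ℝ} (hf : ConvexOn ℝ S f) (h0 : (0 : E) ∈ S) {x : E} {t : ℝ}
    (hx : t • x ∈ S) (ht : 1 ≤ t) :
    t * (f x - f 0) ≤ f (t • x) - f 0 := by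
  have ht0 : 0 < t := by linarith
  have hconv := hf.2 hx h0 (inv_nonneg.2 ht0.le) (sub_nonneg.2 (inv_le_one_of_one_le₀ ht))
    (add_sub_cancel _ _)
  rw [smul_zero, add_zero, smul_smul, inv_mul_cancel₀ ht0.ne', one_smul, smul_eq_mul,
    smul_eq_mul] at hconv
  calc t * (f x - f 0) ≤ t * (t⁻¹ * f (t • x) + (1 - t⁻¹) * f 0 - f 0) := by gcongr
    _ = f (t • x) - f 0 := by field_simp; ring

theorem Real.convexOn_cosh : ConvexOn ℝ univ cosh := by
  have hneg : ConvexOn ℝ univ (fun x => exp (-x)) :=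
    convexOn_exp.comp_linearMap (-LinearMap.id)
  refine ((convexOn_exp.add hneg).smul (by norm_num : (0 : ℝ) ≤ 1 / 2)).congr fun x _ => ?_
  simp only [Pi.add_apply, smul_eq_mul, cosh_eq]
  ring

theorem Real.mul_cosh_sub_one_le (x : ℝ) {t : ℝ} (ht : t ≤ 0 ∨ 1 ≤ t) :
    t * (cosh x - 1) ≤ cosh (t * x) - 1 := by
  rcases ht with ht | ht
  · nlinarith [one_le_cosh x, one_le_cosh (t * x)]
  · simpa using convexOn_cosh.mul_sub_map_zero_le_of_one_le (mem_univ 0) (mem_univ (t • x)) ht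

theorem Real.rpow_mul_rpow_one_sub_add_rpow_mul_rpow_one_sub {a b : ℝ} (ha : 0 < a) (hb : 0 < b)
    (ν : ℝ) :
    a ^ ν * b ^ (1 - ν) + b ^ ν * a ^ (1 - ν) =
      2 * √(a * b) * cosh ((2 * ν - 1) * ((log a - log b) / 2)) := by
  set m := (log a + log b) / 2
  set u := (2 * ν - 1) * ((log a - log b) / 2)
  have hsqrt : √(a * b) = exp m := by
    rw [sqrt_eq_rpow, rpow_def_of_pos (mul_pos ha hb), log_mul ha.ne' hb.ne']
    congr 1
    ring
  have h₁ : a ^ ν * b ^ (1 - ν) = exp (m + u) := by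
    rw [rpow_def_of_pos ha, rpow_def_of_pos hb, ← exp_add]
    congr 1
    ring
  have h₂ : b ^ ν * a ^ (1 - ν) = exp (m - u) := by
    rw [rpow_def_of_pos ha, rpow_def_of_pos hb, ← exp_add]
    congr 1
    ring
  rw [h₁, h₂, hsqrt, cosh_eq, exp_add, exp_sub, exp_neg]
  field_simp

/-- For `a, b > 0` and `ν ∉ [0,1]`:
`(a + b) + 2(ν − 1)(√a − √b)² ≤ a^ν b^{1−ν} + b^ν a^{1−ν}`. -/
theorem symmetrized_young_type_refinement (a b ν : ℝ) (ha : 0 < a) (hb : 0 < b)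
    (hν : ν ∉ Set.Icc (0 : ℝ) 1) :
    (a + b) + 2 * (ν - 1) * (Real.sqrt a - Real.sqrt b) ^ 2 ≤
      a ^ ν * b ^ (1 - ν) + b ^ ν * a ^ (1 - ν) := by
  set d := (log a - log b) / 2
  have hsum : a + b = 2 * √(a * b) * cosh d := by
    have := rpow_mul_rpow_one_sub_add_rpow_mul_rpow_one_sub ha hb 1
    norm_num at this
    exact this
  have hsq : (√a - √b) ^ 2 = a + b - 2 * √(a * b) := by
    rw [sub_sq, sq_sqrt ha.le, sq_sqrt hb.le, sqrt_mul ha.le]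
    ring
  have hν' : 2 * ν - 1 ≤ 0 ∨ 1 ≤ 2 * ν - 1 := by
    rw [mem_Icc, not_and_or, not_le, not_le] at hν
    rcases hν with h | h
    · exact .inl (by linarith)
    · exact .inr (by linarith)
  have hcosh := mul_le_mul_of_nonneg_left (mul_cosh_sub_one_le d hν') (sqrt_nonneg (a * b))
  rw [rpow_mul_rpow_one_sub_add_rpow_mul_rpow_one_sub ha hb, hsq, hsum]
  linear_combination 2 * hcosh
end

section
/- Let a > 0 be a real number and s ≥ 1. Then a + a^{−1} + (s − 1)(a + a^{−1} − 2) ≤ a^s + a^{−s}. -/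
/-! The map `s ↦ a ^ s + a ^ (-s) = a ^ s + (a⁻¹) ^ s` is convex, so its slope on `[1, s]` is at
least its slope `a + a⁻¹ - 2` on `[0, 1]`. -/

open Set

lemma ConvexOn.mul_sub_le_mul_sub {S : Set ℝ} {f : ℝ → ℝ} (hf : ConvexOn ℝ S f) {x y z : ℝ}
    (hx : x ∈ S) (hz : z ∈ S) (hxy : x < y) (hyz : y ≤ z) : (z - y) * (f y - f x) ≤ (y - x) * (f z - f y) := by
  rcases hyz.eq_or_lt with rfl | hyz
  · simp
  have hslope := hf.slope_mono_adjacent hx hz hxy hyz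
  rw [div_le_div_iff₀ (sub_pos.2 hxy) (sub_pos.2 hyz)] at hslope
  linarith

lemma convexOn_rpow_add_rpow_neg {a : ℝ} (ha : 0 < a) :
    ConvexOn ℝ univ fun s : ℝ => a ^ s + a ^ (-s) := by
  simp_rw [Real.rpow_neg ha.le, ← Real.inv_rpow ha.le]
  exact (convexOn_rpow_left ha).add (convexOn_rpow_left (inv_pos.2 ha))

/-- For `a > 0` and `s ≥ 1`: `a + a⁻¹ + (s − 1)(a + a⁻¹ − 2) ≤ a^s + a^{−s}`. -/
theorem scalar_power_refinement (a s : ℝ) (ha : 0 < a) (hs : 1 ≤ s) :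
    a + a⁻¹ + (s - 1) * (a + a⁻¹ - 2) ≤ a ^ s + a ^ (-s) := by
  have h := (convexOn_rpow_add_rpow_neg ha).mul_sub_le_mul_sub (mem_univ 0) (mem_univ s) zero_lt_one hs
  simp only [Real.rpow_zero, neg_zero, Real.rpow_one, Real.rpow_neg_one] at h
  linarith
end
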